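/- arXiv:0809.3234 — 5 statements merged into one kernel-verified Lean document; each statement's English description precedes it below -/
import Mathlib

section
/- Let ∧ be a semilattice operation on A and S = ⟨∧⟩. With the notation of the canonical construction (φ_j = ⋀_{i∈Φ_j} x_i, X_i = {j : i ∈ Φ_j}, E = {X_1,...,X_n}, σ: E → [|E|] a bijection, ψ_j = ⋀_{S∈E, j∈S} x_{σ(S)}, Ξ_k = {i ∈ [n] : X_i = σ^{-1}(k)}, ξ_k = ⋀_{i∈Ξ_k} x_i), each Ξ_k is nonempty and ψ_j(ξ_1,...,ξ_{|E|}) = φ_j for all j; consequently f = g(φ_1,...,φ_m) is an S-minor of f' = g(ψ_1,...,ψ_m), and hence f and f' are S-equivalent. -/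
variable {A : Type*}

/-- Composition of an n-ary operation with n m-ary operations. -/
def Comp {n m : ℕ} (f : (Fin n → A) → A) (g : Fin n → (Fin m → A) → A) :
    (Fin m → A) → A := fun a => f fun i => g i a

/-- A clone: contains all projections and is closed under composition. -/
def IsClone (C : ∀ n, Set ((Fin n → A) → A)) : Prop :=
  (∀ (n : ℕ) (i : Fin n), (fun a : Fin n → A => a i) ∈ C n) ∧
  ∀ (n m : ℕ) (f : (Fin n → A) → A) (g : Fin n → (Fin m → A) → A),
    f ∈ C n → (∀ i, g i ∈ C m) → Comp f g ∈ C m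

/-- `f` is a `C`-minor of `g`. -/
def Minor (C : ∀ n, Set ((Fin n → A) → A)) {n m : ℕ}
    (f : (Fin n → A) → A) (g : (Fin m → A) → A) : Prop :=
  ∃ h : Fin m → (Fin n → A) → A, (∀ i, h i ∈ C n) ∧ f = Comp g h

/-- `f` and `g` are `C`-equivalent. -/
def CEquiv (C : ∀ n, Set ((Fin n → A) → A)) {n m : ℕ}
    (f : (Fin n → A) → A) (g : (Fin m → A) → A) : Prop :=
  Minor C f g ∧ Minor C g f

/-- The clone generated by a family of operations. -/
def CloneGen (F : ∀ n, Set ((Fin n → A) → A)) : ∀ n, Set ((Fin n → A) → A) :=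
  fun n => {f | ∀ C, IsClone C → (∀ k, F k ⊆ C k) → f ∈ C n}

/-- The family consisting of just the binary semilattice (meet) operation. -/
def meetFam (A : Type*) [SemilatticeInf A] : ∀ n, Set ((Fin n → A) → A)
  | 2 => {fun a => a 0 ⊓ a 1}
  | _ => ∅

/-- The clone generated by the semilattice operation `⊓`. -/
def SClone (A : Type*) [SemilatticeInf A] : ∀ n, Set ((Fin n → A) → A) :=
  CloneGen (meetFam A)

/-!
Since `σ` is injective on `E`, the block `Ξ_{σ(S)}` is the class `{i | X_i = S}`, and `Φ_j` is the
union of the classes `X_i = S` with `j ∈ S`; regrouping the meet `φ_j` along these classes gives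
`ψ_j(ξ) = φ_j`. Conversely `{S ∈ E | j ∈ S}` is the image of `Φ_j` under `X`, so substituting the
projections `y ↦ y_{σ(X_i)}` into `φ_j` gives `ψ_j`. Both substitutions use operations of `S`.
-/

lemma CloneGen.isClone (F : ∀ n, Set ((Fin n → A) → A)) :
    IsClone (CloneGen F) :=
  ⟨fun n i _ hC _ => hC.1 n i,
    fun n m f g hf hg C hC hF => hC.2 n m f g (hf C hC hF) fun i => hg i C hC hF⟩

lemma Minor.comp_of_comp_eq {C : ∀ n, Set ((Fin n → A) → A)} {n k m : ℕ}
    (g : (Fin m → A) → A) {φ : Fin m → (Fin n → A) → A} {ψ : Fin m → (Fin k → A) → A}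
    (h : Fin k → (Fin n → A) → A) (hC : ∀ i, h i ∈ C n) (hψ : ∀ j, Comp (ψ j) h = φ j) :
    Minor C (Comp g φ) (Comp g ψ) :=
  ⟨h, hC, by rw [← funext hψ]; rfl⟩

section SClone

variable [SemilatticeInf A] {n : ℕ}

lemma proj_mem_sClone (i : Fin n) : (fun x : Fin n → A => x i) ∈ SClone A n :=
  (CloneGen.isClone _).1 n i

lemma inf_mem_sClone {p q : (Fin n → A) → A} (hp : p ∈ SClone A n) (hq : q ∈ SClone A n) :
    (fun x => p x ⊓ q x) ∈ SClone A n :=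
  (CloneGen.isClone (meetFam A)).2 2 n (fun a => a 0 ⊓ a 1) ![p, q]
    (fun _ _ hF => hF 2 rfl) fun i => by fin_cases i <;> assumption

lemma finsetInf'_mem_sClone {T : Finset (Fin n)} (hT : T.Nonempty) :
    (fun x : Fin n → A => T.inf' hT x) ∈ SClone A n := by
  induction hT using Finset.Nonempty.cons_induction with
  | singleton i => simpa using proj_mem_sClone i
  | cons i s hi hs ih =>
    simpa only [Finset.inf'_cons hs] using inf_mem_sClone (proj_mem_sClone i) ih

end SClone

section Incidence

open Finset

variable {ι κ γ : Type*} [Fintype ι] [DecidableEq κ]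
  {Φ : κ → Finset ι} {X : ι → Finset κ}

lemma filter_mem_image_eq_image (hX : ∀ i j, j ∈ X i ↔ i ∈ Φ j) (j : κ) :
    (univ.image X).filter (fun S => j ∈ S) = (Φ j).image X := by
  ext S
  simp only [mem_filter, mem_image, mem_univ, true_and]
  constructor
  · rintro ⟨⟨i, rfl⟩, hj⟩
    exact ⟨i, (hX i j).1 hj, rfl⟩
  · rintro ⟨i, hi, rfl⟩
    exact ⟨⟨i, rfl⟩, (hX i j).2 hi⟩

lemma biUnion_fiber_eq [DecidableEq ι] [DecidableEq γ] {σ : Finset κ → γ}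
    (hX : ∀ i j, j ∈ X i ↔ i ∈ Φ j) (hσ : Set.InjOn σ ↑(univ.image X)) (j : κ) :
    ((Φ j).image X).biUnion (fun S => univ.filter fun i => σ (X i) = σ S) = Φ j := by
  ext i
  simp only [mem_biUnion, mem_image, mem_filter, mem_univ, true_and]
  constructor
  · rintro ⟨_, ⟨i', hi', rfl⟩, hσi⟩
    have hXi : X i = X i' := hσ (by simp) (by simp) hσi
    exact (hX i j).1 (hXi ▸ (hX i' j).2 hi')
  · exact fun hi => ⟨X i, ⟨i, hi, rfl⟩, rfl⟩

variable {α : Type*} [SemilatticeInf α]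

lemma inf'_filter_mem_fiber_eq [DecidableEq ι] [DecidableEq γ] {σ : Finset κ → γ}
    (hX : ∀ i j, j ∈ X i ↔ i ∈ Φ j) (hσ : Set.InjOn σ ↑(univ.image X)) (j : κ)
    (hj : ((univ.image X).filter (j ∈ ·)).Nonempty)
    (hfib : ∀ S, (univ.filter fun i => σ (X i) = σ S).Nonempty) (hΦ : (Φ j).Nonempty)
    (x : ι → α) :
    ((univ.image X).filter (j ∈ ·)).inf' hj
      (fun S => (univ.filter fun i => σ (X i) = σ S).inf' (hfib S) x) = (Φ j).inf' hΦ x :=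
  calc _ = ((Φ j).image X).inf' (hΦ.image X)
        (fun S => (univ.filter fun i => σ (X i) = σ S).inf' (hfib S) x) :=
        inf'_congr _ (filter_mem_image_eq_image hX j) fun _ _ => rfl
    _ = _ := (inf'_biUnion x (hΦ.image X) hfib).symm
    _ = _ := inf'_congr _ (biUnion_fiber_eq hX hσ j) fun _ _ => rfl

lemma inf'_filter_mem_eq_inf'_comp (hX : ∀ i j, j ∈ X i ↔ i ∈ Φ j) (j : κ)
    (hj : ((univ.image X).filter (j ∈ ·)).Nonempty) (hΦ : (Φ j).Nonempty) (y : Finset κ → α) :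
    ((univ.image X).filter (j ∈ ·)).inf' hj y = (Φ j).inf' hΦ (y ∘ X) := by
  rw [inf'_congr hj (filter_mem_image_eq_image hX j) fun _ _ => rfl, inf'_image]

end Incidence

/-- In the canonical construction, each `Ξ_k` is nonempty, substituting the
meets `ξ_k = ⋀_{i ∈ Ξ_k} x_i` into `ψ_j` recovers `φ_j`; consequently
`f = g(φ_1, …, φ_m)` is an `S`-minor of `f' = g(ψ_1, …, ψ_m)` and `f` and `f'`
are `S`-equivalent. -/
theorem stmt9 {A : Type*} [SemilatticeInf A] {n m : ℕ}
    (Φ : Fin m → Finset (Fin n)) (hΦ : ∀ j, (Φ j).Nonempty)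
    (φ : Fin m → (Fin n → A) → A)
    (hφ : ∀ j, φ j = fun x => (Φ j).inf' (hΦ j) x)
    (g : (Fin m → A) → A) (f : (Fin n → A) → A) (hf : f = Comp g φ)
    (X : Fin n → Finset (Fin m))
    (hX : ∀ i, X i = Finset.univ.filter fun j => i ∈ Φ j)
    (E : Finset (Finset (Fin m))) (hE : E = Finset.image X Finset.univ)
    (σ : Finset (Fin m) → Fin E.card)
    (hσ : Set.BijOn σ (↑E) Set.univ)
    (hne : ∀ j : Fin m, (E.filter fun S => j ∈ S).Nonempty)
    (ψ : Fin m → (Fin E.card → A) → A)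
    (hψ : ∀ j, ψ j = fun y => (E.filter fun S => j ∈ S).inf' (hne j)
      fun S => y (σ S))
    (f' : (Fin E.card → A) → A) (hf' : f' = Comp g ψ)
    (Ξ : Fin E.card → Finset (Fin n))
    (hΞ : ∀ k, Ξ k = Finset.univ.filter fun i => σ (X i) = k) :
    ∃ hne' : ∀ k, (Ξ k).Nonempty,
      (∀ j, Comp (ψ j) (fun k x => (Ξ k).inf' (hne' k) x) = φ j) ∧
      Minor (SClone A) f f' ∧ CEquiv (SClone A) f f' := by
  obtain rfl : Ξ = _ := funext hΞ
  subst hf hf' hE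
  have hXΦ : ∀ i j, j ∈ X i ↔ i ∈ Φ j := by simp [hX]
  have hne' : ∀ k, (Finset.univ.filter fun i => σ (X i) = k).Nonempty := fun k => by
    obtain ⟨_, hS, rfl⟩ := hσ.surjOn (Set.mem_univ k)
    obtain ⟨i, -, rfl⟩ := Finset.mem_image.1 hS
    exact ⟨i, by simp⟩
  have hξ : ∀ j, Comp (ψ j) (fun k x => (Finset.univ.filter fun i => σ (X i) = k).inf' (hne' k) x)
      = φ j := fun j => funext fun x => by
    rw [hψ, hφ]
    exact inf'_filter_mem_fiber_eq hXΦ hσ.injOn j (hne j) (fun S => hne' (σ S)) (hΦ j) x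
  have hf_minor := Minor.comp_of_comp_eq g _ (fun k => finsetInf'_mem_sClone (hne' k)) hξ
  refine ⟨hne', hξ, hf_minor, hf_minor, Minor.comp_of_comp_eq g _
    (fun i => proj_mem_sClone (σ (X i))) fun j => funext fun y => ?_⟩
  rw [hψ, hφ]
  exact (inf'_filter_mem_eq_inf'_comp hXΦ j (hne j) (hΦ j) (y ∘ σ)).symm
end

section
/- Let ∧ be a semilattice operation on A and S = ⟨∧⟩. Suppose f_1 = g(φ_1,...,φ_m) and f_2 = g(φ'_1,...,φ'_m) are S-decompositions with the same outer function g, where φ_j = ⋀_{i∈Φ_j} x_i (on n variables) and φ'_j = ⋀_{i∈Φ'_j} x_i (on n' variables). If the associated set systems coincide, i.e., {X_1,...,X_n} = {X'_1,...,X'_{n'}} where X_i = {j : i ∈ Φ_j} and X'_i = {j : i ∈ Φ'_j}, then f_1 and f_2 are S-equivalent. -/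
/-!
Write `X i = {j | i ∈ Φ j}` for the occurrences of the variable `x i`. To obtain `f₁` from
`f₂`, substitute for `x' i'` the meet of all `x i` with `X i = X' i'` (such `i` exist because
the two set systems agree). Then `φ'_j` becomes the meet of all `x i` with `X i = X' i'` for
some `i' ∈ Φ'_j`, and these `i` are exactly those in `Φ_j`, so `φ'_j` becomes `φ_j`.
-/

variable {A : Type*}

open Finset

theorem IsClone.inf'_mem [SemilatticeInf A] {C : ∀ n, Set ((Fin n → A) → A)}
    (hC : IsClone C) (hmeet : (fun a : Fin 2 → A => a 0 ⊓ a 1) ∈ C 2) {n : ℕ}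
    (s : Finset (Fin n)) (hs : s.Nonempty) : (fun x : Fin n → A => s.inf' hs x) ∈ C n := by
  induction hs using Nonempty.cons_induction with
  | singleton i => simpa using hC.1 n i
  | cons i s hi hs ih =>
    have hargs : ∀ k, ![fun x : Fin n → A => x i, fun x => s.inf' hs x] k ∈ C n := by
      intro k
      fin_cases k
      exacts [hC.1 n i, ih]
    convert hC.2 2 n _ _ hmeet hargs using 1
    funext x
    simp [Comp, inf'_insert hs]

theorem inf'_mem_SClone [SemilatticeInf A] {n : ℕ} (s : Finset (Fin n))
    (hs : s.Nonempty) : (fun x : Fin n → A => s.inf' hs x) ∈ SClone A n :=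
  fun _ hC hF => hC.inf'_mem (hF 2 rfl) s hs

def occurrences {n m : ℕ} (Φ : Fin m → Finset (Fin n)) (i : Fin n) : Finset (Fin m) :=
  univ.filter fun j => i ∈ Φ j

section SetSystems

variable {n n' m : ℕ} {Φ : Fin m → Finset (Fin n)} {Φ' : Fin m → Finset (Fin n')}

theorem mem_iff_exists_occurrences_eq
    (h : univ.image (occurrences Φ) ⊆ univ.image (occurrences Φ')) (j : Fin m) (i : Fin n) :
    i ∈ Φ j ↔ ∃ i' ∈ Φ' j, occurrences Φ i = occurrences Φ' i' := by
  constructor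
  · intro hi
    obtain ⟨i', -, hi'⟩ := mem_image.mp (h (mem_image_of_mem _ (mem_univ i)))
    have hj : j ∈ occurrences Φ' i' := hi' ▸ mem_filter.mpr ⟨mem_univ j, hi⟩
    exact ⟨i', (mem_filter.mp hj).2, hi'.symm⟩
  · rintro ⟨i', hi', hii'⟩
    have hj : j ∈ occurrences Φ i := hii' ▸ mem_filter.mpr ⟨mem_univ j, hi'⟩
    exact (mem_filter.mp hj).2

theorem eq_biUnion_occurrences_fiber
    (h : univ.image (occurrences Φ) ⊆ univ.image (occurrences Φ')) (j : Fin m) :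
    Φ j = (Φ' j).biUnion fun i' => univ.filter fun i => occurrences Φ i = occurrences Φ' i' := by
  ext i
  simp [mem_iff_exists_occurrences_eq h j i]

theorem occurrences_fiber_nonempty
    (h : univ.image (occurrences Φ') ⊆ univ.image (occurrences Φ)) (i' : Fin n') :
    (univ.filter fun i => occurrences Φ i = occurrences Φ' i').Nonempty := by
  obtain ⟨i, -, hi⟩ := mem_image.mp (h (mem_image_of_mem _ (mem_univ i')))
  exact ⟨i, mem_filter.mpr ⟨mem_univ i, hi⟩⟩

end SetSystems

theorem minor_comp_inf'_of_image_occurrences_eq [SemilatticeInf A] {n n' m : ℕ}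
    (g : (Fin m → A) → A) (Φ : Fin m → Finset (Fin n)) (hΦ : ∀ j, (Φ j).Nonempty)
    (Φ' : Fin m → Finset (Fin n')) (hΦ' : ∀ j, (Φ' j).Nonempty)
    (h : univ.image (occurrences Φ) = univ.image (occurrences Φ')) :
    Minor (SClone A) (Comp g fun j x => (Φ j).inf' (hΦ j) x)
      (Comp g fun j x => (Φ' j).inf' (hΦ' j) x) := by
  have hfib := occurrences_fiber_nonempty h.ge
  refine ⟨fun i' x => (univ.filter fun i => occurrences Φ i = occurrences Φ' i').inf' (hfib i') x,
    fun i' => inf'_mem_SClone _ _, ?_⟩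
  funext x
  refine congrArg g (funext fun j => ?_)
  dsimp only
  rw [← inf'_biUnion _ (hΦ' j) hfib]
  exact inf'_congr _ (eq_biUnion_occurrences_fiber h.le j) fun _ _ => rfl

/-- Two `S`-decompositions with the same outer function and the same associated
set system yield `S`-equivalent functions. -/
theorem stmt10 {A : Type*} [SemilatticeInf A] {n n' m : ℕ}
    (g : (Fin m → A) → A)
    (Φ : Fin m → Finset (Fin n)) (hΦ : ∀ j, (Φ j).Nonempty)
    (Φ' : Fin m → Finset (Fin n')) (hΦ' : ∀ j, (Φ' j).Nonempty)
    (φ : Fin m → (Fin n → A) → A)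
    (hφ : ∀ j, φ j = fun x => (Φ j).inf' (hΦ j) x)
    (φ' : Fin m → (Fin n' → A) → A)
    (hφ' : ∀ j, φ' j = fun x => (Φ' j).inf' (hΦ' j) x)
    (f₁ : (Fin n → A) → A) (hf₁ : f₁ = Comp g φ)
    (f₂ : (Fin n' → A) → A) (hf₂ : f₂ = Comp g φ')
    (hXX : Finset.image (fun i => Finset.univ.filter fun j => i ∈ Φ j)
        (Finset.univ : Finset (Fin n)) =
      Finset.image (fun i => Finset.univ.filter fun j => i ∈ Φ' j)
        (Finset.univ : Finset (Fin n'))) :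
    CEquiv (SClone A) f₁ f₂ := by
  obtain rfl : φ = _ := funext hφ
  obtain rfl : φ' = _ := funext hφ'
  subst hf₁ hf₂
  exact ⟨minor_comp_inf'_of_image_occurrences_eq g Φ hΦ Φ' hΦ' hXX,
    minor_comp_inf'_of_image_occurrences_eq g Φ' hΦ' Φ hΦ hXX.symm⟩
end

section
/- Let ∧ be a semilattice operation on A and S = ⟨∧⟩. For every operation g: A^m → A, the number of S-equivalence classes of operations of the form g(φ_1,...,φ_m) with φ_1,...,φ_m ∈ S (of a common arity) is at most the number of subsets of the power set of [m], i.e., at most 2^(2^m); in particular it is finite. -/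
/-! Every member of `S = ⟨∧⟩` is a meet `⋀_{j ∈ T} x_j` of a nonempty set of variables, so
`g(φ_1, …, φ_m)` is given by sets `T_1, …, T_m ⊆ [n]`. Give each variable `j` its pattern
`{i | j ∈ T_i} ⊆ [m]`. If two families `T`, `T'` realise the same set of patterns, substituting
for each variable `x_{j'}` of `g(⋀T'_1, …, ⋀T'_m)` the meet of all `x_j` with the same pattern
gives back `g(⋀T_1, …, ⋀T_m)`, and vice versa. Hence the `S`-equivalence class is determined by
a subset of `P([m])`. -/

variable {A : Type*}

lemma exists_finite_cover_of_invariant {α β K : Type*} [Finite K] (F : α → β) (key : α → K)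
    (r : β → β → Prop) (h : ∀ x y, key x = key y → r (F x) (F y)) :
    ∃ R : Set β, R.Finite ∧ R.ncard ≤ Nat.card K ∧ ∀ x, ∃ y ∈ R, r (F x) y := by
  choose s hs using fun k : Set.range key => k.2
  refine ⟨Set.range (F ∘ s), Set.finite_range _, ?_, fun x => ?_⟩
  · calc (Set.range (F ∘ s)).ncard = Nat.card (Set.range (F ∘ s)) :=
          (Nat.card_coe_set_eq _).symm
      _ ≤ Nat.card (Set.range key) := Finite.card_range_le _
      _ ≤ Nat.card K := Finite.card_subtype_le _
  · exact ⟨F (s ⟨key x, x, rfl⟩), ⟨_, rfl⟩, h _ _ (hs ⟨key x, x, rfl⟩).symm⟩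

section CloneGen

variable {F : ∀ n, Set ((Fin n → A) → A)}

lemma proj_mem_cloneGen {n : ℕ} (i : Fin n) : (fun a : Fin n → A => a i) ∈ CloneGen F n :=
  fun _ hC _ => hC.1 n i

lemma comp_mem_cloneGen {n m : ℕ} {f : (Fin n → A) → A} {g : Fin n → (Fin m → A) → A}
    (hf : f ∈ CloneGen F n) (hg : ∀ i, g i ∈ CloneGen F m) : Comp f g ∈ CloneGen F m :=
  fun C hC hFC => hC.2 n m f g (hf C hC hFC) fun i => hg i C hC hFC

lemma mem_cloneGen_of_mem {n : ℕ} {f : (Fin n → A) → A} (hf : f ∈ F n) : f ∈ CloneGen F n :=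
  fun _ _ hFC => hFC n hf

lemma cloneGen_subset {C : ∀ n, Set ((Fin n → A) → A)} (hC : IsClone C)
    (hFC : ∀ k, F k ⊆ C k) (n : ℕ) : CloneGen F n ⊆ C n :=
  fun _ hf => hf C hC hFC

end CloneGen

section Semilattice

variable [SemilatticeInf A]

variable (A) in
def varMeets (n : ℕ) : Set ((Fin n → A) → A) :=
  {f | ∃ (T : Finset (Fin n)) (hT : T.Nonempty), f = T.inf' hT}

lemma isClone_varMeets : IsClone (varMeets A) := by
  refine ⟨fun n i => ⟨{i}, Finset.singleton_nonempty i, by funext a; simp⟩, ?_⟩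
  rintro n m _ g ⟨T, hT, rfl⟩ hg
  choose U hU hgU using hg
  refine ⟨T.biUnion U, hT.biUnion fun i _ => hU i, ?_⟩
  funext a
  simp only [Comp, hgU]
  exact (Finset.inf'_biUnion a hT hU).symm

lemma meetFam_subset_varMeets (k : ℕ) : meetFam A k ⊆ varMeets A k := by
  intro f hf
  rcases k with _ | _ | _ | k
  · exact hf.elim
  · exact hf.elim
  · obtain rfl : f = fun a => a 0 ⊓ a 1 := hf
    exact ⟨Finset.univ, Finset.univ_nonempty, by funext a; simp [Fin.univ_succ]⟩
  · exact hf.elim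

lemma inf'_mem_sClone {n : ℕ} {T : Finset (Fin n)} (hT : T.Nonempty) :
    T.inf' hT ∈ SClone A n := by
  unfold SClone
  induction hT using Finset.Nonempty.cons_induction with
  | singleton j =>
    convert proj_mem_cloneGen j using 1
    funext a
    simp
  | cons j T hj hT ih =>
    have hmeet : (fun a : Fin 2 → A => a 0 ⊓ a 1) ∈ CloneGen (meetFam A) 2 :=
      mem_cloneGen_of_mem (Set.mem_singleton _)
    convert comp_mem_cloneGen hmeet (g := ![fun a => a j, T.inf' hT])
      (fun i => by fin_cases i; exacts [proj_mem_cloneGen j, ih]) using 1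
    funext a
    rw [Finset.inf'_cons hT]
    rfl

theorem sClone_eq_varMeets (n : ℕ) : SClone A n = varMeets A n := by
  refine (cloneGen_subset isClone_varMeets meetFam_subset_varMeets n).antisymm ?_
  rintro _ ⟨T, hT, rfl⟩
  exact inf'_mem_sClone (A := A) hT

end Semilattice

section Patterns

variable {m n n' : ℕ}

def pattern (T : Fin m → Finset (Fin n)) (j : Fin n) : Finset (Fin m) := {i | j ∈ T i}

def patterns (T : Fin m → Finset (Fin n)) : Finset (Finset (Fin m)) :=
  Finset.univ.image (pattern T)

lemma mem_pattern {T : Fin m → Finset (Fin n)} {i : Fin m} {j : Fin n} :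
    i ∈ pattern T j ↔ j ∈ T i := by
  simp [pattern]

def patternFiber (T : Fin m → Finset (Fin n)) (T' : Fin m → Finset (Fin n')) (j' : Fin n') :
    Finset (Fin n) :=
  {j | pattern T j = pattern T' j'}

variable {T : Fin m → Finset (Fin n)} {T' : Fin m → Finset (Fin n')}

lemma patternFiber_nonempty (h : patterns T' ⊆ patterns T) (j' : Fin n') :
    (patternFiber T T' j').Nonempty := by
  obtain ⟨j, -, hj⟩ := Finset.mem_image.1 (h (Finset.mem_image_of_mem _ (Finset.mem_univ j')))
  exact ⟨j, by simpa [patternFiber] using hj⟩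

lemma biUnion_patternFiber (h : patterns T ⊆ patterns T') (i : Fin m) :
    (T' i).biUnion (patternFiber T T') = T i := by
  ext j
  simp only [Finset.mem_biUnion, patternFiber, Finset.mem_filter, Finset.mem_univ, true_and]
  constructor
  · rintro ⟨j', hj', hjj'⟩
    rwa [← mem_pattern, hjj', mem_pattern]
  · intro hj
    obtain ⟨j', -, hj'⟩ :=
      Finset.mem_image.1 (h (Finset.mem_image_of_mem _ (Finset.mem_univ j)))
    exact ⟨j', by rwa [← mem_pattern, hj', mem_pattern], hj'.symm⟩

variable [SemilatticeInf A]

lemma minor_comp_inf'_of_patterns_eq (g : (Fin m → A) → A) (hT : ∀ i, (T i).Nonempty)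
    (hT' : ∀ i, (T' i).Nonempty) (h : patterns T = patterns T') :
    Minor (SClone A) (Comp g fun i => (T i).inf' (hT i))
      (Comp g fun i => (T' i).inf' (hT' i)) := by
  have hU := patternFiber_nonempty h.ge
  refine ⟨fun j' => (patternFiber T T' j').inf' (hU j'), fun j' => inf'_mem_sClone _, ?_⟩
  funext a
  simp only [Comp]
  congr 1
  funext i
  rw [← Finset.inf'_biUnion a (hT' i) hU]
  exact Finset.inf'_congr _ (biUnion_patternFiber h.le i).symm fun _ _ => rfl

lemma cEquiv_comp_inf'_of_patterns_eq (g : (Fin m → A) → A) (hT : ∀ i, (T i).Nonempty)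
    (hT' : ∀ i, (T' i).Nonempty) (h : patterns T = patterns T') :
    CEquiv (SClone A) (Comp g fun i => (T i).inf' (hT i))
      (Comp g fun i => (T' i).inf' (hT' i)) :=
  ⟨minor_comp_inf'_of_patterns_eq g hT hT' h, minor_comp_inf'_of_patterns_eq g hT' hT h.symm⟩

end Patterns

/-- For a fixed outer function `g : A^m → A`, the operations of the form
`g(φ_1, …, φ_m)` with all `φ_i ∈ S` fall into at most `2 ^ 2 ^ m` many
`S`-equivalence classes; in particular finitely many. -/
theorem stmt11 {A : Type*} [SemilatticeInf A] {m : ℕ} (g : (Fin m → A) → A) :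
    ∃ R : Set (Σ n, (Fin n → A) → A), R.Finite ∧ R.ncard ≤ 2 ^ 2 ^ m ∧
      ∀ (n : ℕ) (φ : Fin m → (Fin n → A) → A), (∀ i, φ i ∈ SClone A n) →
        ∃ r ∈ R, CEquiv (SClone A) (Comp g φ) r.2 := by
  obtain ⟨R, hfin, hcard, hcover⟩ := exists_finite_cover_of_invariant
    (fun T : Σ n, {T : Fin m → Finset (Fin n) // ∀ i, (T i).Nonempty} =>
      (⟨T.1, Comp g fun i => (T.2.1 i).inf' (T.2.2 i)⟩ : Σ n, (Fin n → A) → A))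
    (fun T => patterns T.2.1) (fun f f' => CEquiv (SClone A) f.2 f'.2)
    (fun T T' h => cEquiv_comp_inf'_of_patterns_eq g T.2.2 T'.2.2 h)
  refine ⟨R, hfin, hcard.trans_eq (by simp), fun n φ hφ => ?_⟩
  choose T hT hφT using fun i => (sClone_eq_varMeets n).le (hφ i)
  obtain rfl : φ = fun i => (T i).inf' (hT i) := funext hφT
  exact hcover ⟨n, T, hT⟩
end

section
/- Let (A; ∧) be a semilattice with an identity element 1 (satisfying x ∧ 1 = x) and a zero element 0 (satisfying x ∧ 0 = 0). Let C be any clone on A with ⟨∧⟩ ⊆ C ⊆ ⟨∧, 0, 1⟩, where 0 and 1 are regarded as constant operations. Then the partial order induced by the C-minor relation on the C-equivalence classes of operations on A satisfies the descending chain condition. -/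
variable {A : Type*}

/-- The family consisting of the meet operation together with the (unary)
constant operations with values `⊥` (zero) and `⊤` (identity). -/
def meetFam01 (A : Type*) [SemilatticeInf A] [OrderTop A] [OrderBot A] :
    ∀ n, Set ((Fin n → A) → A)
  | 1 => {fun _ => (⊥ : A), fun _ => (⊤ : A)}
  | 2 => {fun a => a 0 ⊓ a 1}
  | _ => ∅

/-- The clone generated by `⊓`, `0` and `1`. -/
def SClone01 (A : Type*) [SemilatticeInf A] [OrderTop A] [OrderBot A] :
    ∀ n, Set ((Fin n → A) → A) :=
  CloneGen (meetFam01 A)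

/-!
Every operation of `⟨∧, 0, 1⟩` is the constant `⊥` or a meet of variables, so along a descending
chain `f (k + 1) = f k ∘ h k` one can write `f k = f 0 ∘ t k` for a tuple of such terms `t k`, each
tuple obtained from the previous one by substitution. Three finite sets attached to `t k` can only
grow: the pairs `(G, j)` with `⨅ g ∈ G, t k g ≤ t k j`, the rows equal to `⊥`, and, when the
constant `⊤` is not in `C`, the families of rows sharing a variable. Once all three are stable,
substituting back for each new variable `y` the intersection of the old rows whose new row
contains `y` recovers `t k` from `t (k + 1)` using operations of `C` only, so `f k` is a `C`-minor
of `f (k + 1)`.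
-/

section Clones

variable {C : ∀ n, Set ((Fin n → A) → A)}

lemma IsClone.const_mem (hC : IsClone C) {k n : ℕ} {c : A} (hc : (fun _ => c) ∈ C k)
    {g : (Fin n → A) → A} (hg : g ∈ C n) : (fun _ => c) ∈ C n :=
  hC.2 k n _ (fun _ => g) hc fun _ => hg

lemma IsClone.exists_forall_nonempty (hC : IsClone C) {F : ℕ → Σ n, (Fin n → A) → A}
    (hF : ∀ k, Minor C (F (k + 1)).2 (F k).2) :
    ∃ N, ∀ k ≥ N, Fin (F (k + 1)).1 → (C (F k).1).Nonempty := by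
  by_cases h : ∃ K, (C (F K).1).Nonempty
  · obtain ⟨K, hK⟩ := h
    suffices ∀ k ≥ K, (C (F k).1).Nonempty from ⟨K, fun k hk _ => this k hk⟩
    intro k hk
    induction k, hk using Nat.le_induction with
    | base => exact hK
    | succ k _ ih =>
      obtain ⟨c, hc⟩ := ih
      obtain ⟨s, hs, -⟩ := hF k
      exact ⟨Comp c s, hC.2 _ _ c s hc hs⟩
  · exact ⟨0, fun k _ y => (h ⟨k + 1, _, hC.1 _ y⟩).elim⟩

end Clones

open OrderDual

-- `↑S` stands for the meet of the variables in `S` and `⊥` for the constant `⊥`; in the order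
-- dual the meet of two terms is the union of their variable sets.
abbrev MeetTerm (n : ℕ) := WithBot (Finset (Fin n))ᵒᵈ

namespace MeetTerm

variable {n p q : ℕ} {B : Type*} [SemilatticeInf B] [OrderTop B] [OrderBot B]

def var (x : Fin n) : MeetTerm n := ↑(toDual ({x} : Finset (Fin n)))

def lift (v : Fin n → B) : InfTopHom (MeetTerm n) B where
  toFun := WithBot.recBotCoe ⊥ fun S => (ofDual S).inf v
  map_inf' t u := by
    induction t using WithBot.recBotCoe <;> induction u using WithBot.recBotCoe
    all_goals first | rfl | simp
    rw [← WithBot.coe_inf]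
    exact Finset.inf_union
  map_top' := by exact Finset.inf_empty

@[simp] lemma lift_bot (v : Fin n → B) : lift v ⊥ = ⊥ := rfl

@[simp] lemma lift_coe (v : Fin n → B) (S : (Finset (Fin n))ᵒᵈ) :
    lift v S = (ofDual S).inf v := rfl

@[simp] lemma lift_var (v : Fin n → B) (x : Fin n) : lift v (var x) = v x :=
  Finset.inf_singleton

lemma lift_lift (v : Fin q → B) (r : Fin p → MeetTerm q) (t : MeetTerm p) :
    lift v (lift r t) = lift (fun x => lift v (r x)) t := by
  induction t using WithBot.recBotCoe with
  | bot => rfl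
  | coe S => exact map_finset_inf (lift v) _ _

lemma coe_le_var {S : (Finset (Fin n))ᵒᵈ} {x : Fin n} :
    (S : MeetTerm n) ≤ var x ↔ x ∈ ofDual S := by
  rw [var, WithBot.coe_le_coe, ← ofDual_le_ofDual]
  simp

lemma le_lift_iff {t : MeetTerm n} (ht : t ≠ ⊥) {v : Fin n → B} {b : B} :
    b ≤ lift v t ↔ ∀ x, t ≤ var x → b ≤ v x := by
  obtain ⟨S, rfl⟩ := WithBot.ne_bot_iff_exists.mp ht
  simp [coe_le_var]

lemma finset_inf_var (T : Finset (Fin n)) :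
    T.inf var = ((toDual T : (Finset (Fin n))ᵒᵈ) : MeetTerm n) := by
  induction T using Finset.induction_on with
  | empty => rfl
  | insert x T _ ih => rw [Finset.inf_insert, ih, var, ← WithBot.coe_inf]; rfl

lemma lift_var_eq (t : MeetTerm n) : lift var t = t := by
  induction t using WithBot.recBotCoe with
  | bot => rfl
  | coe S => exact finset_inf_var _

lemma le_iff_forall_le_var {t u : MeetTerm n} (ht : t ≠ ⊥) :
    u ≤ t ↔ ∀ x, t ≤ var x → u ≤ var x := by
  conv_lhs => rw [← lift_var_eq t]
  exact le_lift_iff ht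

lemma var_ne_top (x : Fin n) : var x ≠ ⊤ := by
  intro h
  have := WithBot.coe_injective h
  simp at this

lemma infPrime_var (x : Fin n) : InfPrime (var x) := by
  refine ⟨fun h => var_ne_top x (h.eq_top), fun t u h => ?_⟩
  induction t using WithBot.recBotCoe with
  | bot => exact Or.inl bot_le
  | coe S =>
    induction u using WithBot.recBotCoe with
    | bot => exact Or.inr bot_le
    | coe U =>
      rw [← WithBot.coe_inf, coe_le_var] at h
      rw [coe_le_var, coe_le_var]
      exact Finset.mem_union.mp h

lemma lift_congr {t : MeetTerm n} {v w : Fin n → B} (h : ∀ x, t ≤ var x → v x = w x) :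
    lift v t = lift w t := by
  induction t using WithBot.recBotCoe with
  | bot => rfl
  | coe S => exact Finset.inf_congr rfl fun x hx => h x (coe_le_var.2 hx)

lemma lift_ne_top {t : MeetTerm p} (ht : t ≠ ⊤) {r : Fin p → MeetTerm q} (hr : ∀ x, r x ≠ ⊤) :
    lift r t ≠ ⊤ := by
  induction t using WithBot.recBotCoe with
  | bot => exact WithBot.bot_ne_coe
  | coe S =>
    obtain ⟨x, hx⟩ : (ofDual S).Nonempty := by
      rw [Finset.nonempty_iff_ne_empty]
      rintro h
      exact ht (congrArg WithBot.some (congrArg toDual h))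
    exact ne_top_of_le_ne_top (hr x) (Finset.inf_le hx)

end MeetTerm

open MeetTerm

section Rows

variable {m p q : ℕ}

def coverPairs (t : Fin m → MeetTerm p) : Set (Finset (Fin m) × Fin m) :=
  {c | c.1.inf t ≤ t c.2}

def botRows (t : Fin m → MeetTerm p) : Set (Fin m) :=
  {j | t j = ⊥}

def boundedFamilies (t : Fin m → MeetTerm p) : Set (Finset (Fin m)) :=
  {G | G.sup t ≠ ⊤}

lemma coverPairs_subset_lift_comp (t : Fin m → MeetTerm p) (r : Fin p → MeetTerm q) :
    coverPairs t ⊆ coverPairs (lift r ∘ t) := fun c (hc : c.1.inf t ≤ t c.2) =>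
  show c.1.inf (lift r ∘ t) ≤ lift r (t c.2) by
    rw [← map_finset_inf]
    exact OrderHomClass.mono _ hc

lemma botRows_subset_lift_comp (t : Fin m → MeetTerm p) (r : Fin p → MeetTerm q) :
    botRows t ⊆ botRows (lift r ∘ t) := fun j (hj : t j = ⊥) =>
  show lift r (t j) = ⊥ by rw [hj, lift_bot]

lemma boundedFamilies_subset_lift_comp (t : Fin m → MeetTerm p) {r : Fin p → MeetTerm q}
    (hr : ∀ x, r x ≠ ⊤) : boundedFamilies t ⊆ boundedFamilies (lift r ∘ t) := fun _ hG =>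
  ne_top_of_le_ne_top (lift_ne_top hG hr) <|
    Finset.sup_le fun _ hj => OrderHomClass.mono _ (Finset.le_sup (f := t) hj)

def backSubst (t : Fin m → MeetTerm p) (t' : Fin m → MeetTerm q) (y : Fin q) : MeetTerm p :=
  (Finset.univ.filter fun j => t' j ≤ var y).sup t

lemma lift_backSubst {t : Fin m → MeetTerm p} {r : Fin p → MeetTerm q}
    (hcov : coverPairs (lift r ∘ t) ⊆ coverPairs t) (hbot : botRows (lift r ∘ t) ⊆ botRows t)
    (j : Fin m) : lift (backSubst t (lift r ∘ t)) (lift r (t j)) = t j := by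
  by_cases hj : t j = ⊥
  · simp [hj]
  have hj' : lift r (t j) ≠ ⊥ := fun h => hj (hbot h)
  refine le_antisymm ((le_iff_forall_le_var hj).2 fun x hx => ?_)
    ((le_lift_iff hj').2 fun y hy => Finset.le_sup (Finset.mem_filter.2 ⟨Finset.mem_univ _, hy⟩))
  set G := Finset.univ.filter fun i => ¬t i ≤ var x
  have hG : ¬G.inf t ≤ t j := fun h => by
    obtain ⟨i, hi, hix⟩ := (infPrime_var x).finset_inf_le.1 (h.trans hx)
    exact (Finset.mem_filter.1 hi).2 hix
  obtain ⟨y, hy, hGy⟩ : ∃ y, lift r (t j) ≤ var y ∧ ¬G.inf (lift r ∘ t) ≤ var y := by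
    have : (G, j) ∉ coverPairs (lift r ∘ t) := fun h => hG (hcov h)
    simpa using mt (le_iff_forall_le_var hj').2 this
  calc lift (backSubst t (lift r ∘ t)) (lift r (t j))
      ≤ lift (backSubst t (lift r ∘ t)) (var y) := OrderHomClass.mono _ hy
    _ ≤ var x := by
      refine (lift_var _ y).trans_le (Finset.sup_le fun i hi => ?_)
      by_contra hix
      have hiG : i ∈ G := by simpa [G] using hix
      exact hGy ((Finset.inf_le hiG).trans (Finset.mem_filter.1 hi).2)

lemma backSubst_ne_top {t : Fin m → MeetTerm p} {t' : Fin m → MeetTerm q}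
    (hbd : boundedFamilies t' ⊆ boundedFamilies t) (y : Fin q) : backSubst t t' y ≠ ⊤ :=
  hbd <| ne_top_of_le_ne_top (var_ne_top y) <|
    Finset.sup_le fun _ hj => (Finset.mem_filter.1 hj).2

lemma backSubst_ne_bot {t : Fin m → MeetTerm p} {r : Fin p → MeetTerm q} {j : Fin m} {y : Fin q}
    (hj : lift r (t j) ≠ ⊥) (hy : lift r (t j) ≤ var y) : backSubst t (lift r ∘ t) y ≠ ⊥ :=
  fun h => hj <| botRows_subset_lift_comp t r <| le_bot_iff.1 <|
    h ▸ Finset.le_sup (f := t) (Finset.mem_filter.2 ⟨Finset.mem_univ _, hy⟩)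

end Rows

namespace MeetTerm

variable [SemilatticeInf A] [OrderTop A] [OrderBot A] {n p : ℕ}

def eval (t : MeetTerm n) : (Fin n → A) → A := fun a => lift a t

lemma eval_lift (r : Fin p → MeetTerm n) (t : MeetTerm p) :
    (eval (lift r t) : (Fin n → A) → A) = Comp (eval t) fun x => eval (r x) :=
  funext fun a => lift_lift a r t

@[simp] lemma eval_var (x : Fin n) : eval (var x) = fun a : Fin n → A => a x :=
  funext fun a => lift_var a x

@[simp] lemma eval_top : eval (⊤ : MeetTerm n) = fun _ : Fin n → A => ⊤ :=
  funext fun a => map_top (lift a)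

@[simp] lemma eval_bot : eval (⊥ : MeetTerm n) = fun _ : Fin n → A => ⊥ := rfl

@[simp] lemma eval_inf (t u : MeetTerm n) :
    eval (t ⊓ u) = fun a : Fin n → A => eval t a ⊓ eval u a :=
  funext fun a => map_inf (lift a) t u

end MeetTerm

def termOps (A : Type*) [SemilatticeInf A] [OrderTop A] [OrderBot A] :
    ∀ n, Set ((Fin n → A) → A) :=
  fun _ => Set.range eval

section TermOps

variable [SemilatticeInf A] [OrderTop A] [OrderBot A] {C : ∀ n, Set ((Fin n → A) → A)}

lemma isClone_termOps : IsClone (termOps A) := by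
  refine ⟨fun n x => ⟨var x, eval_var x⟩, ?_⟩
  rintro n m _ g ⟨t, rfl⟩ hg
  choose r hr using hg
  exact ⟨lift r t, by rw [eval_lift]; simp only [hr]⟩

lemma sclone01_subset_termOps (n : ℕ) : SClone01 A n ⊆ termOps A n := by
  refine fun f hf => hf _ isClone_termOps fun k => ?_
  match k with
  | 1 =>
    rintro _ (rfl | rfl)
    exacts [⟨⊥, eval_bot⟩, ⟨⊤, eval_top⟩]
  | 2 =>
    rintro _ rfl
    exact ⟨var 0 ⊓ var 1, by simp⟩
  | 0 | k + 3 => exact fun _ h => h.elim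

lemma eval_mem_sclone {S : Finset (Fin n)} (hS : S.Nonempty) :
    eval ((toDual S : (Finset (Fin n))ᵒᵈ) : MeetTerm n) ∈ SClone A n := by
  intro D hD hmeet
  induction hS using Finset.Nonempty.cons_induction with
  | singleton x =>
    show eval (var x) ∈ D n
    exact (eval_var (A := A) x).symm ▸ hD.1 n x
  | cons x S hx _ ih =>
    have h := hD.2 2 n _ ![(eval (var x) : (Fin n → A) → A), eval _] (hmeet 2 rfl)
      (Fin.forall_fin_two.2 ⟨(eval_var (A := A) x).symm ▸ hD.1 n x, ih⟩)
    convert h using 1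
    funext a
    simp only [Comp, Finset.cons_eq_insert, Matrix.cons_val_zero, Matrix.cons_val_one, eval_var]
    exact Finset.inf_insert

lemma eval_mem (hC : IsClone C) (hS : ∀ n, SClone A n ⊆ C n) {t : MeetTerm n} (hbot : t ≠ ⊥)
    (htop : (fun _ : Fin 1 → A => (⊤ : A)) ∈ C 1 ∨ t ≠ ⊤) (hne : (C n).Nonempty) :
    eval t ∈ C n := by
  obtain ⟨S, rfl⟩ := WithBot.ne_bot_iff_exists.mp hbot
  by_cases hS' : (ofDual S).Nonempty
  · exact hS n (eval_mem_sclone hS')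
  · have : (S : MeetTerm n) = ⊤ := by
      rw [Finset.not_nonempty_iff_eq_empty] at hS'
      exact congrArg WithBot.some (congrArg toDual hS')
    rw [this, eval_top]
    exact hC.const_mem (htop.resolve_right (not_not.2 this)) hne.some_mem

end TermOps

section Chains

variable [SemilatticeInf A] [OrderTop A] [OrderBot A] {C : ∀ n, Set ((Fin n → A) → A)}
  {n m p q : ℕ}

lemma Minor.exists_eval {f : (Fin n → A) → A} {g : (Fin m → A) → A} (hfg : Minor C f g)
    (hC : C n ⊆ termOps A n) :
    ∃ r : Fin m → MeetTerm n, (∀ i, eval (r i) ∈ C n) ∧ f = Comp g fun i => eval (r i) := by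
  obtain ⟨h, hh, rfl⟩ := hfg
  choose r hr using fun i => hC (hh i)
  exact ⟨r, fun i => hr i ▸ hh i, by simp only [hr]⟩

theorem minor_of_stable (hC : IsClone C) (hS : ∀ n, SClone A n ⊆ C n) (g : (Fin m → A) → A)
    {t : Fin m → MeetTerm p} {r : Fin p → MeetTerm q}
    (hcov : coverPairs (lift r ∘ t) ⊆ coverPairs t) (hbot : botRows (lift r ∘ t) ⊆ botRows t)
    (hbd : (fun _ : Fin 1 → A => (⊤ : A)) ∈ C 1 ∨
      boundedFamilies (lift r ∘ t) ⊆ boundedFamilies t)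
    (hne : Fin q → (C p).Nonempty) :
    Minor C (fun a => g fun j => eval (t j) a) (fun a => g fun j => eval (lift r (t j)) a) := by
  classical
  set Q := backSubst t (lift r ∘ t)
  -- `Q y = ⊥` only for variables `y` that occur in no row, so any operation of `C` will do there
  let s : Fin q → (Fin p → A) → A := fun y => if Q y = ⊥ then (hne y).some else eval (Q y)
  refine ⟨s, fun y => ?_, funext fun a => congrArg g (funext fun j => ?_)⟩
  · by_cases hy : Q y = ⊥
    · simpa [s, hy] using (hne y).some_mem
    · simpa [s, hy] using eval_mem hC hS hy (hbd.imp_right (backSubst_ne_top · y)) (hne y)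
  · by_cases hj : lift r (t j) = ⊥
    · have : t j = ⊥ := hbot hj
      simp [this]
    conv_lhs => rw [← lift_backSubst hcov hbot j, eval_lift]
    refine lift_congr fun y hy => ?_
    exact congrFun (if_neg (backSubst_ne_bot hj hy)).symm a

def rowSeq {p : ℕ → ℕ} (r : ∀ k, Fin (p k) → MeetTerm (p (k + 1))) :
    ∀ k, Fin (p 0) → MeetTerm (p k)
  | 0 => var
  | k + 1 => lift (r k) ∘ rowSeq r k

lemma eval_rowSeq {F : ℕ → Σ n, (Fin n → A) → A}
    {r : ∀ k, Fin (F k).1 → MeetTerm (F (k + 1)).1}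
    (hr : ∀ k, (F (k + 1)).2 = Comp (F k).2 fun i => eval (r k i)) (k : ℕ) :
    (F k).2 = fun a => (F 0).2 fun j => eval (rowSeq (p := fun k => (F k).1) r k j) a := by
  induction k with
  | zero => simp [rowSeq]
  | succ k ih =>
    rw [hr k, ih]
    funext a
    simp [Comp, rowSeq, eval_lift]

lemma exists_stable_rowSeq (hC : IsClone C) {p : ℕ → ℕ}
    {r : ∀ k, Fin (p k) → MeetTerm (p (k + 1))} (hr : ∀ k i, eval (r k i) ∈ C (p (k + 1))) :
    ∃ N, ∀ k ≥ N, coverPairs (rowSeq r (k + 1)) ⊆ coverPairs (rowSeq r k) ∧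
      botRows (rowSeq r (k + 1)) ⊆ botRows (rowSeq r k) ∧
      ((fun _ : Fin 1 → A => (⊤ : A)) ∈ C 1 ∨
        boundedFamilies (rowSeq r (k + 1)) ⊆ boundedFamilies (rowSeq r k)) := by
  classical
  let topFree : Prop := (fun _ : Fin 1 → A => (⊤ : A)) ∉ C 1
  have hr_ne_top (k i) (h : topFree) : r k i ≠ ⊤ := fun hi =>
    h (hC.const_mem (eval_top (A := A) ▸ hi ▸ hr k i) (hC.1 1 0))
  -- substituting `⊤` can separate rows, so bounded families only persist when `⊤ ∉ C 1`
  let profile : ℕ →o Set (Finset (Fin (p 0)) × Fin (p 0)) × Set (Fin (p 0)) ×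
      Set (Finset (Fin (p 0))) :=
    ⟨fun k => (coverPairs (rowSeq r k), botRows (rowSeq r k),
        {G | topFree ∧ G ∈ boundedFamilies (rowSeq r k)}),
      monotone_nat_of_le_succ fun k =>
        ⟨coverPairs_subset_lift_comp _ _, botRows_subset_lift_comp _ _,
          fun _ ⟨h, hG⟩ => ⟨h, boundedFamilies_subset_lift_comp _ (hr_ne_top k · h) hG⟩⟩⟩
  obtain ⟨N, hN⟩ := WellFoundedGT.monotone_chain_condition profile
  refine ⟨N, fun k hk => ?_⟩
  have h := (hN k hk).symm.trans (hN (k + 1) (by omega))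
  simp only [profile, OrderHom.coe_mk, Prod.mk.injEq] at h
  obtain ⟨hcov, hbot, hbd⟩ := h
  exact ⟨hcov ▸ subset_rfl, hbot ▸ subset_rfl,
    or_iff_not_imp_left.2 fun h G hG => ((Set.ext_iff.1 hbd G).2 ⟨h, hG⟩).2⟩

end Chains

theorem stmt13_general {A : Type*} [SemilatticeInf A] [OrderTop A] [OrderBot A]
    (C : ∀ n, Set ((Fin n → A) → A)) (hC : IsClone C)
    (hS : ∀ n, SClone A n ⊆ C n) (hS01 : ∀ n, C n ⊆ SClone01 A n)
    (F : ℕ → Σ n, (Fin n → A) → A)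
    (hdesc : ∀ k, Minor C (F (k + 1)).2 (F k).2) :
    ∃ N : ℕ, ∀ k ≥ N, CEquiv C (F k).2 (F (k + 1)).2 := by
  choose r hrC hr using fun k =>
    (hdesc k).exists_eval ((hS01 _).trans (sclone01_subset_termOps _))
  obtain ⟨N₁, hN₁⟩ := exists_stable_rowSeq hC hrC
  obtain ⟨N₂, hN₂⟩ := hC.exists_forall_nonempty hdesc
  refine ⟨max N₁ N₂, fun k hk => ⟨?_, hdesc k⟩⟩
  obtain ⟨hcov, hbot, hbd⟩ := hN₁ k (le_of_max_le_left hk)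
  rw [eval_rowSeq hr k, eval_rowSeq hr (k + 1)]
  exact minor_of_stable hC hS _ hcov hbot hbd (hN₂ k (le_of_max_le_right hk))

/-- For any clone `C` with `⟨∧⟩ ⊆ C ⊆ ⟨∧, 0, 1⟩`, the `C`-minor partial order
on `C`-equivalence classes satisfies the descending chain condition. -/
theorem stmt13 {A : Type*} [Nonempty A] [SemilatticeInf A] [OrderTop A] [OrderBot A]
    (C : ∀ n, Set ((Fin n → A) → A)) (hC : IsClone C)
    (hS : ∀ n, SClone A n ⊆ C n) (hS01 : ∀ n, C n ⊆ SClone01 A n)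
    (F : ℕ → Σ n, (Fin n → A) → A)
    (hdesc : ∀ k, Minor C (F (k + 1)).2 (F k).2) :
    ∃ N : ℕ, ∀ k ≥ N, CEquiv C (F k).2 (F (k + 1)).2 :=
  stmt13_general C hC hS hS01 F hdesc
end

section
/- Let C be a clone on A containing a subclone S such that every member of C \ S is a constant operation. If f: A^n → A is a nonconstant operation, then a C-decomposition f = g(h_1,...,h_m) that is minimal among C-decompositions has all h_i ∈ S; consequently deg_C f = deg_S f. -/
/-!
An inner function of a `C`-decomposition that is constant can be absorbed into the outer
function, giving a `C`-decomposition with one inner function fewer. Hence a minimal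
`C`-decomposition of a nonconstant operation has no constant inner functions, so its inner
functions lie in `S`, and it is also an `S`-decomposition.
-/

variable {A : Type*}

/-- The `C`-degree of an operation: 0 for constants, otherwise the least arity of
an outer function in a `C`-decomposition. -/
noncomputable def degC (C : ∀ n, Set ((Fin n → A) → A)) {n : ℕ}
    (f : (Fin n → A) → A) : ℕ :=
  letI := Classical.dec (∃ c : A, f = fun _ => c)
  if (∃ c : A, f = fun _ => c) then 0
  else sInf {m | ∃ g : (Fin m → A) → A, Minor C f g}

theorem Minor.mono {C D : ∀ n, Set ((Fin n → A) → A)} (hCD : ∀ n, C n ⊆ D n) {n m : ℕ}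
    {f : (Fin n → A) → A} {g : (Fin m → A) → A} (hfg : Minor C f g) : Minor D f g := by
  obtain ⟨h, hh, hf⟩ := hfg
  exact ⟨h, fun i => hCD n (hh i), hf⟩

theorem IsClone.minor_self {C : ∀ n, Set ((Fin n → A) → A)} (hC : IsClone C) {n : ℕ}
    (f : (Fin n → A) → A) : Minor C f f :=
  ⟨fun i a => a i, hC.1 n, rfl⟩

theorem minor_insertNth_of_comp_of_eq_const {C : ∀ n, Set ((Fin n → A) → A)} {n k : ℕ}
    {f : (Fin n → A) → A} {g : (Fin (k + 1) → A) → A} {h : Fin (k + 1) → (Fin n → A) → A}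
    (hh : ∀ j, h j ∈ C n) (hf : f = Comp g h) {i : Fin (k + 1)} {c : A}
    (hc : h i = fun _ => c) :
    Minor C f fun a : Fin k → A => g (i.insertNth c a) := by
  refine ⟨fun j => h (i.succAbove j), fun j => hh _, ?_⟩
  funext a
  have hci : c = h i a := by rw [hc]
  subst hf
  show g (fun j => h j a) = g (i.insertNth c fun j => h (i.succAbove j) a)
  rw [hci]
  exact congrArg g (Fin.insertNth_self_removeNth i _).symm

section degC

variable {C : ∀ n, Set ((Fin n → A) → A)} {n : ℕ} {f : (Fin n → A) → A}

theorem degC_of_not_const (hnc : ¬ ∃ c : A, f = fun _ => c) :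
    degC C f = sInf {m | ∃ g : (Fin m → A) → A, Minor C f g} :=
  if_neg hnc

theorem degC_le_of_minor (hnc : ¬ ∃ c : A, f = fun _ => c) {m : ℕ} {g : (Fin m → A) → A}
    (hfg : Minor C f g) : degC C f ≤ m :=
  (degC_of_not_const hnc).trans_le (Nat.sInf_le ⟨g, hfg⟩)

theorem exists_minor_degC (hnc : ¬ ∃ c : A, f = fun _ => c) {m : ℕ} {g : (Fin m → A) → A}
    (hfg : Minor C f g) : ∃ g : (Fin (degC C f) → A) → A, Minor C f g := by
  rw [degC_of_not_const hnc]
  exact Nat.sInf_mem (⟨m, g, hfg⟩ : Set.Nonempty {m | ∃ g : (Fin m → A) → A, Minor C f g})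

theorem not_const_of_comp_of_eq_degC (hnc : ¬ ∃ c : A, f = fun _ => c) {m : ℕ}
    {g : (Fin m → A) → A} {h : Fin m → (Fin n → A) → A} (hh : ∀ i, h i ∈ C n)
    (hf : f = Comp g h) (hm : m = degC C f) (i : Fin m) :
    ¬ ∃ c : A, h i = fun _ => c := by
  rintro ⟨c, hc⟩
  obtain ⟨k, rfl⟩ : ∃ k, m = k + 1 := Nat.exists_eq_succ_of_ne_zero i.pos.ne'
  have := degC_le_of_minor hnc (minor_insertNth_of_comp_of_eq_const hh hf hc)
  omega

end degC

theorem stmt15_general {A : Type*}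
    (C S : ∀ n, Set ((Fin n → A) → A)) (hS : IsClone S)
    (hSC : ∀ n, S n ⊆ C n)
    (hconst : ∀ (n : ℕ) (f : (Fin n → A) → A),
      f ∈ C n → f ∉ S n → ∃ c : A, f = fun _ => c)
    {n : ℕ} (f : (Fin n → A) → A) (hnc : ¬ ∃ c : A, f = fun _ => c) :
    (∀ (m : ℕ) (g : (Fin m → A) → A) (h : Fin m → (Fin n → A) → A),
      (∀ i, h i ∈ C n) → f = Comp g h → m = degC C f → ∀ i, h i ∈ S n) ∧
    degC C f = degC S f := by
  have inner_mem_S : ∀ (m : ℕ) (g : (Fin m → A) → A) (h : Fin m → (Fin n → A) → A),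
      (∀ i, h i ∈ C n) → f = Comp g h → m = degC C f → ∀ i, h i ∈ S n :=
    fun m g h hh hf hm i => by_contra fun hi =>
      not_const_of_comp_of_eq_degC hnc hh hf hm i (hconst n (h i) (hh i) hi)
  have hf_self : Minor S f f := hS.minor_self f
  refine ⟨inner_mem_S, le_antisymm ?_ ?_⟩
  · obtain ⟨g, hfg⟩ := exists_minor_degC hnc hf_self
    exact degC_le_of_minor hnc (hfg.mono hSC)
  · obtain ⟨g, h, hh, hf⟩ := exists_minor_degC hnc (hf_self.mono hSC)
    exact degC_le_of_minor hnc ⟨h, inner_mem_S _ g h hh hf rfl, hf⟩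

/-- If `S ⊆ C` are clones such that every member of `C \ S` is constant, then a
minimal `C`-decomposition of a nonconstant `f` has all its inner functions in
`S`, and consequently `deg_C f = deg_S f`. -/
theorem stmt15 {A : Type*} [Nonempty A]
    (C S : ∀ n, Set ((Fin n → A) → A)) (hC : IsClone C) (hS : IsClone S)
    (hSC : ∀ n, S n ⊆ C n)
    (hconst : ∀ (n : ℕ) (f : (Fin n → A) → A),
      f ∈ C n → f ∉ S n → ∃ c : A, f = fun _ => c)
    {n : ℕ} (f : (Fin n → A) → A) (hnc : ¬ ∃ c : A, f = fun _ => c) :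
    (∀ (m : ℕ) (g : (Fin m → A) → A) (h : Fin m → (Fin n → A) → A),
      (∀ i, h i ∈ C n) → f = Comp g h → m = degC C f → ∀ i, h i ∈ S n) ∧
    degC C f = degC S f :=
  stmt15_general C S hS hSC hconst f hnc
end
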